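/- Suppose r₀, r₁, r₂ > 0 and θ₀, θ₁, θ₂ ∈ (0, π) satisfy r₁ sin θ₁ = r₀ sin θ₀, r₂ sin θ₂ = r₀ sin θ₀, 1/r₁ − 1/r₂ = 1/r₀, and cos θ₁ + cos θ₂ + cos θ₀ = 0. If additionally θ₂ = θ₀ + 2π/3, then as r₂ → ∞ along any family of solutions with r₁ bounded, one has θ₂ → π, θ₀ → π/3, θ₁ → π/3, and r₁/r₀ → 1. -/

import Mathlib

open Real Filter

theorem stmt_2 (r₀ r₁ r₂ θ₀ θ₁ θ₂ : ℕ → ℝ)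
    (hr₀ : ∀ k, 0 < r₀ k) (hr₁ : ∀ k, 0 < r₁ k) (hr₂ : ∀ k, 0 < r₂ k)
    (hθ₀ : ∀ k, θ₀ k ∈ Set.Ioo (0 : ℝ) π) (hθ₁ : ∀ k, θ₁ k ∈ Set.Ioo (0 : ℝ) π)
    (hθ₂ : ∀ k, θ₂ k ∈ Set.Ioo (0 : ℝ) π)
    (e3 : ∀ k, r₁ k * Real.sin (θ₁ k) = r₀ k * Real.sin (θ₀ k))
    (e4 : ∀ k, r₂ k * Real.sin (θ₂ k) = r₀ k * Real.sin (θ₀ k))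
    (e5 : ∀ k, 1 / r₁ k - 1 / r₂ k = 1 / r₀ k)
    (e6 : ∀ k, Real.cos (θ₁ k) + Real.cos (θ₂ k) + Real.cos (θ₀ k) = 0)
    (hang : ∀ k, θ₂ k = θ₀ k + 2 * π / 3)
    (hbd : ∃ C, ∀ k, r₁ k ≤ C)
    (hlim : Tendsto r₂ atTop atTop) :
    Tendsto θ₂ atTop (nhds π) ∧ Tendsto θ₀ atTop (nhds (π / 3)) ∧
    Tendsto θ₁ atTop (nhds (π / 3)) ∧
    Tendsto (fun k => r₁ k / r₀ k) atTop (nhds 1) := by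
  obtain ⟨C, hC⟩ := hbd
  have hC0 : (0:ℝ) < C := lt_of_lt_of_le (hr₁ 0) (hC 0)
  have hCdiv : Tendsto (fun k => C / r₂ k) atTop (nhds 0) :=
    Tendsto.div_atTop tendsto_const_nhds hlim
  have hbound : ∀ k, r₀ k * Real.sin (θ₀ k) ≤ C := by
    intro k
    have h1 : r₁ k * Real.sin (θ₁ k) ≤ r₁ k := by
      nlinarith [Real.sin_le_one (θ₁ k), (hr₁ k).le]
    have := e3 k
    linarith [hC k]
  have hsin_nonneg : ∀ k, 0 ≤ Real.sin (θ₂ k) := fun k =>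
    Real.sin_nonneg_of_nonneg_of_le_pi (hθ₂ k).1.le (hθ₂ k).2.le
  have hsin0 : Tendsto (fun k => Real.sin (θ₂ k)) atTop (nhds 0) := by
    apply squeeze_zero hsin_nonneg (fun k => ?_) hCdiv
    have h2 : Real.sin (θ₂ k) = r₀ k * Real.sin (θ₀ k) / r₂ k := by
      rw [eq_div_iff (hr₂ k).ne']
      linarith [e4 k]
    rw [h2]
    exact div_le_div_of_nonneg_right (hbound k) (hr₂ k).le
  have hhalf : ∀ k, π / 2 ≤ θ₂ k := by
    intro k
    have := hang k
    have := (hθ₀ k).1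
    linarith [Real.pi_pos]
  have harcs : ∀ k, π - θ₂ k = Real.arcsin (Real.sin (θ₂ k)) := by
    intro k
    rw [← Real.sin_pi_sub, Real.arcsin_sin]
    · linarith [(hθ₂ k).2, Real.pi_pos]
    · linarith [hhalf k]
  have harc0 : Tendsto (fun k => π - θ₂ k) atTop (nhds 0) := by
    simp only [harcs]
    have := (Real.continuous_arcsin.tendsto 0).comp hsin0
    simpa [Real.arcsin_zero, Function.comp_def] using this
  have ht2 : Tendsto θ₂ atTop (nhds π) := by
    have h : Tendsto (fun k => π - (π - θ₂ k)) atTop (nhds (π - 0)) :=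
      tendsto_const_nhds.sub harc0
    simpa using h
  have ht0 : Tendsto θ₀ atTop (nhds (π / 3)) := by
    have h : Tendsto (fun k => θ₂ k - 2 * π / 3) atTop (nhds (π - 2 * π / 3)) :=
      ht2.sub tendsto_const_nhds
    have heq : π - 2 * π / 3 = π / 3 := by ring
    rw [heq] at h
    exact h.congr fun k => by linarith [hang k]
  have ht1 : Tendsto θ₁ atTop (nhds (π / 3)) := by
    have hcos : Tendsto (fun k => Real.cos (θ₁ k)) atTop (nhds (1/2)) := by
      have h : ∀ k, Real.cos (θ₁ k) = -Real.cos (θ₂ k) - Real.cos (θ₀ k) :=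
        fun k => by linarith [e6 k]
      simp only [h]
      have h2 := (Real.continuous_cos.tendsto π).comp ht2
      have h0 := (Real.continuous_cos.tendsto (π/3)).comp ht0
      have := (h2.neg.sub h0)
      simp only [Function.comp] at this
      convert this using 2
      rw [Real.cos_pi, Real.cos_pi_div_three]
      norm_num
    have harccos : ∀ k, θ₁ k = Real.arccos (Real.cos (θ₁ k)) := fun k =>
      (Real.arccos_cos (hθ₁ k).1.le (hθ₁ k).2.le).symm
    rw [show Tendsto θ₁ atTop (nhds (π/3)) ↔
        Tendsto (fun k => Real.arccos (Real.cos (θ₁ k))) atTop (nhds (π/3)) by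
      constructor <;> intro h <;> [skip; skip] <;>
        · refine h.congr fun k => ?_ <;> rw [← harccos k]]
    have := (Real.continuous_arccos.tendsto (1/2)).comp hcos
    simp only [Function.comp_def] at this
    convert this using 1
    rw [show (1:ℝ)/2 = Real.cos (π/3) by rw [Real.cos_pi_div_three],
      Real.arccos_cos (by positivity) (by linarith [Real.pi_pos])]
  refine ⟨ht2, ht0, ht1, ?_⟩
  have hratio : ∀ k, r₁ k / r₀ k = 1 - r₁ k / r₂ k := by
    intro k
    rw [div_eq_mul_one_div, ← e5 k, mul_sub, mul_one_div, mul_one_div,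
      div_self (hr₁ k).ne']
  simp only [hratio]
  have hz : Tendsto (fun k => r₁ k / r₂ k) atTop (nhds 0) := by
    apply squeeze_zero (fun k => div_nonneg (hr₁ k).le (hr₂ k).le) (fun k => ?_) hCdiv
    exact div_le_div_of_nonneg_right (hC k) (hr₂ k).le
  have h : Tendsto (fun k => (1:ℝ) - r₁ k / r₂ k) atTop (nhds (1 - 0)) :=
    tendsto_const_nhds.sub hz
  simpa using h
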